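/- arXiv:2209.06698 — 3 statements merged into one kernel-verified Lean document; each statement's English description precedes it below -/
import Mathlib

section
/- Let S be a Salem polynomial of degree 2n with |S(1) · S(-1)| = 1. Then n is odd. -/
/-!
Over `ℝ`, a Salem polynomial `S` is squarefree (it is irreducible over `ℚ`) and its only root
in `(1, ∞)` is `α`, so `S / (X - α)` is monic without roots in `(1, ∞)` and hence nonnegative
at `1`, which gives `S(1) < 0`. Since `S` has even degree and no root `≤ -1`, also `S(-1) > 0`.
So `|S(1) S(-1)| = 1` forces `S(1) - S(-1) = -2`. But `S(1) - S(-1)` is twice the sum of the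
odd-index coefficients, and when `n` is even these pair up under `i ↦ 2n - i` without fixed
point, so `4 ∣ S(1) - S(-1)`.
-/

open Polynomial

/-- A Salem polynomial: a monic irreducible palindromic polynomial in `ℤ[X]` of even
degree `≥ 2`, having a real root `α > 1` and such that every complex root off the unit
circle is `α` or `α⁻¹` (both positive real numbers). -/
def IsSalemPoly (S : Polynomial ℤ) : Prop :=
  S.Monic ∧ Irreducible S ∧ 2 ≤ S.natDegree ∧ Even S.natDegree ∧
  (∀ i ≤ S.natDegree, S.coeff i = S.coeff (S.natDegree - i)) ∧
  ∃ α : ℝ, 1 < α ∧ Polynomial.aeval α S = 0 ∧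
    ∀ z : ℂ, Polynomial.aeval z S = 0 → ‖z‖ ≠ 1 →
      (z = (α : ℂ) ∨ z = ((α⁻¹ : ℝ) : ℂ))

open Finset

theorem Finset.two_dvd_sum_of_involution {ι : Type*} {s : Finset ι} {f : ι → ℤ}
    (g : ι → ι) (hf : ∀ a ∈ s, f (g a) = f a) (hne : ∀ a ∈ s, g a ≠ a)
    (hmem : ∀ a ∈ s, g a ∈ s) (hinv : ∀ a ∈ s, g (g a) = a) : 2 ∣ ∑ i ∈ s, f i := by
  refine (ZMod.intCast_zmod_eq_zero_iff_dvd _ 2).mp ?_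
  rw [Int.cast_sum]
  refine sum_involution (fun a _ => g a) (fun a ha => ?_) (fun a ha _ => hne a ha) hmem hinv
  rw [hf a ha, CharTwo.add_self_eq_zero]

theorem Polynomial.eval_one_sub_eval_neg_one {R : Type*} [CommRing R] (p : R[X]) :
    p.eval 1 - p.eval (-1) = 2 * ∑ i ∈ (range (p.natDegree + 1)).filter Odd, p.coeff i := by
  rw [eval_eq_sum_range, eval_eq_sum_range, ← sum_sub_distrib, mul_sum, sum_filter]
  refine sum_congr rfl fun i _ => ?_
  rcases i.even_or_odd with hi | hi
  · simp [hi.neg_one_pow, Nat.not_odd_iff_even.mpr hi]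
  · simp only [one_pow, mul_one, hi.neg_one_pow, if_pos hi]
    ring

theorem Polynomial.four_dvd_eval_one_sub_eval_neg_one {S : ℤ[X]} {n : ℕ}
    (hpal : ∀ i ≤ S.natDegree, S.coeff i = S.coeff (S.natDegree - i))
    (hdeg : S.natDegree = 2 * n) (hn : Even n) :
    4 ∣ S.eval 1 - S.eval (-1) := by
  obtain ⟨m, rfl⟩ := hn
  have hodd : 2 ∣ ∑ i ∈ (range (S.natDegree + 1)).filter Odd, S.coeff i := by
    refine two_dvd_sum_of_involution (fun i => S.natDegree - i) (fun i hi => ?_)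
      (fun i hi => ?_) (fun i hi => ?_) (fun i hi => ?_) <;>
      simp only [mem_filter, mem_range, Nat.odd_iff] at hi ⊢ <;> try omega
    exact (hpal i (by omega)).symm
  rw [eval_one_sub_eval_neg_one]
  exact mul_dvd_mul_left 2 hodd

theorem Polynomial.Monic.eval_nonneg_of_forall_gt_not_isRoot {p : ℝ[X]} (hp : p.Monic) {b : ℝ}
    (h : ∀ r, b < r → ¬p.IsRoot r) : 0 ≤ p.eval b := by
  by_contra! hb
  have hdeg : 0 < p.degree := by
    by_contra! h0
    rw [hp.natDegree_eq_zero.mp (natDegree_eq_zero_iff_degree_le_zero.mpr h0)] at hb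
    norm_num at hb
  obtain ⟨M, hMpos, hbM⟩ := (((p.tendsto_atTop_of_leadingCoeff_nonneg hdeg
    (hp.leadingCoeff ▸ zero_le_one)).eventually_gt_atTop 0).and
    (Filter.eventually_gt_atTop b)).exists
  obtain ⟨r, hr, hr0⟩ := intermediate_value_Ioo hbM.le p.continuous.continuousOn ⟨hb, hMpos⟩
  exact h r hr.1 hr0

theorem Polynomial.Monic.eval_neg_of_unique_isRoot_gt {f : ℝ[X]} (hf : f.Monic)
    (hsq : Squarefree f) {α b : ℝ} (hbα : b < α) (hα : f.IsRoot α)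
    (huniq : ∀ r, b < r → f.IsRoot r → r = α) (hb : ¬f.IsRoot b) : f.eval b < 0 := by
  set q := f /ₘ (X - C α)
  have hfq : (X - C α) * q = f := mul_divByMonic_eq_iff_isRoot.mpr hα
  have hqα : ¬q.IsRoot α := fun h => not_isUnit_X_sub_C α <|
    hsq _ ⟨q /ₘ (X - C α), by rw [mul_assoc, mul_divByMonic_eq_iff_isRoot.mpr h, hfq]⟩
  have hq : 0 ≤ q.eval b := by
    refine ((monic_X_sub_C α).of_mul_monic_left (hfq ▸ hf)).eval_nonneg_of_forall_gt_not_isRoot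
      fun r hr hqr => ?_
    obtain rfl := huniq r hr (by rw [← hfq]; simp [hqr.eq_zero])
    exact hqα hqr
  have hfb : f.eval b = (b - α) * q.eval b := by rw [← hfq]; simp
  exact lt_of_le_of_ne (hfb ▸ mul_nonpos_of_nonpos_of_nonneg (by linarith) hq) hb

theorem Polynomial.Monic.eval_pos_of_forall_lt_not_isRoot {f : ℝ[X]} (hf : f.Monic)
    (heven : Even f.natDegree) {b : ℝ} (h : ∀ r, r < b → ¬f.IsRoot r) (hb : ¬f.IsRoot b) :
    0 < f.eval b := by
  have hg : (f.comp (-X)).Monic := by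
    simpa [heven.neg_one_pow] using hf.neg_one_pow_natDegree_mul_comp_neg_X
  have := hg.eval_nonneg_of_forall_gt_not_isRoot (b := -b) fun r hr hroot =>
    h (-r) (by linarith) (by simpa using hroot)
  simp only [eval_comp, eval_neg, eval_X, neg_neg] at this
  exact lt_of_le_of_ne this (Ne.symm hb)

theorem Polynomial.Monic.separable_map_of_irreducible {S : ℤ[X]} (hS : S.Monic)
    (hirr : Irreducible S) (K : Type*) [Field K] [CharZero K] :
    (S.map (algebraMap ℤ K)).Separable := by
  have hQ : (S.map (Int.castRingHom ℚ)).Separable :=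
    ((IsPrimitive.Int.irreducible_iff_irreducible_map_cast hS.isPrimitive).mp hirr).separable
  have hcomp : (algebraMap ℚ K).comp (Int.castRingHom ℚ) = algebraMap ℤ K :=
    RingHom.ext_int _ _
  simpa [map_map, hcomp] using hQ.map (f := algebraMap ℚ K)

namespace IsSalemPoly

variable {S : ℤ[X]}

theorem exists_real_roots (hS : IsSalemPoly S) :
    ∃ α : ℝ, 1 < α ∧ (S.map (algebraMap ℤ ℝ)).IsRoot α ∧
      ∀ r,  (S.map (algebraMap ℤ ℝ)).IsRoot r → |r| ≠ 1 → r = α ∨ r = α⁻¹ := by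
  obtain ⟨-, -, -, -, -, α, hα1, hα, hoff⟩ := hS
  refine ⟨α, hα1, by rwa [IsRoot, eval_map_algebraMap], fun r hr hr1 => ?_⟩
  rw [IsRoot, eval_map_algebraMap] at hr
  have hz : aeval (r : ℂ) S = 0 := by
    rw [← Complex.coe_algebraMap, aeval_algebraMap_apply, hr, map_zero]
  exact_mod_cast hoff r hz (by rwa [Complex.norm_real, Real.norm_eq_abs])

theorem eval_intCast_ne_zero (hS : IsSalemPoly S) (x : ℤ) : S.eval x ≠ 0 := by
  obtain ⟨-, hirr, hdeg, -⟩ := hS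
  exact hirr.not_isRoot_of_natDegree_ne_one (by omega)

theorem eval_one_neg (hS : IsSalemPoly S) : S.eval 1 < 0 := by
  obtain ⟨α, hα1, hα, hreal⟩ := hS.exists_real_roots
  have hne := hS.eval_intCast_ne_zero 1
  obtain ⟨hmon, hirr, -⟩ := hS
  have hcast : (S.map (algebraMap ℤ ℝ)).eval 1 = S.eval 1 := by
    exact_mod_cast eval_intCast_map (algebraMap ℤ ℝ) S 1
  have hneg := (hmon.map (algebraMap ℤ ℝ)).eval_neg_of_unique_isRoot_gt
    (hmon.separable_map_of_irreducible hirr ℝ).squarefree hα1 hα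
    (fun r hr hroot => (hreal r hroot (by rw [abs_of_pos (by linarith)]; linarith)).resolve_right
      fun hr' => (inv_lt_one_of_one_lt₀ hα1).not_gt (hr' ▸ hr))
    (by rw [IsRoot, hcast]; exact_mod_cast hne)
  exact_mod_cast hcast ▸ hneg

theorem eval_neg_one_pos (hS : IsSalemPoly S) : 0 < S.eval (-1) := by
  obtain ⟨α, hα1, -, hreal⟩ := hS.exists_real_roots
  have hne := hS.eval_intCast_ne_zero (-1)
  obtain ⟨hmon, -, -, heven, -⟩ := hS
  have hcast : (S.map (algebraMap ℤ ℝ)).eval (-1) = S.eval (-1) := by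
    exact_mod_cast eval_intCast_map (algebraMap ℤ ℝ) S (-1)
  have hpos := (hmon.map (algebraMap ℤ ℝ)).eval_pos_of_forall_lt_not_isRoot (b := -1)
    (by rwa [hmon.natDegree_map])
    (fun r hr hroot => by
      have : 0 < α⁻¹ := by positivity
      rcases hreal r hroot (by rw [abs_of_neg (by linarith)]; linarith) with rfl | rfl <;> linarith)
    (by rw [IsRoot, hcast]; exact_mod_cast hne)
  exact_mod_cast hcast ▸ hpos

end IsSalemPoly

/-- If `S` is a Salem polynomial of degree `2n` with `|S(1)·S(-1)| = 1`,
then `n` is odd. -/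
theorem stmt4 (n : ℕ) (S : Polynomial ℤ) (hS : IsSalemPoly S)
    (hdeg : S.natDegree = 2 * n)
    (habs : |S.eval 1 * S.eval (-1)| = 1) :
    Odd n := by
  have h1 := hS.eval_one_neg
  have h2 := hS.eval_neg_one_pos
  have hunit : -S.eval 1 * S.eval (-1) = 1 := by
    rwa [abs_mul, abs_of_neg h1, abs_of_pos h2] at habs
  have he2 : S.eval (-1) = 1 := Int.eq_one_of_mul_eq_one_left h2.le hunit
  rw [he2, mul_one] at hunit
  obtain ⟨-, -, -, -, hpal, -⟩ := hS
  by_contra hn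
  have h4 := four_dvd_eval_one_sub_eval_neg_one hpal hdeg (Nat.not_odd_iff_even.mp hn)
  omega
end

section
/- Let r, s ≥ 0 be integers with r ≡ s (mod 8), and let q_{r,s} be the diagonal quadratic form over ℚ with r entries equal to 1 and s entries equal to -1. Then for every prime p, the Hasse–Witt invariant of q_{r,s} over ℚ_p equals the Hasse–Witt invariant of the hyperbolic form of dimension r + s over ℚ_p. -/
/-!
Over any field the Hilbert symbol `(1, x)` is trivial, so the Hasse–Witt invariant of
`⟨1, …, 1, a, …, a⟩` with `m` entries `a` is `(a, a) ^ C(m, 2)`. Since `(a, a) ^ 2 = 1` and the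
parity of `C(m, 2)` depends only on `m mod 4`, the invariants of `q_{r,s}` and of the hyperbolic
form (where `m = s` and `m = (r + s) / 2`) agree as soon as `s ≡ (r + s) / 2 [MOD 4]`, which is
what `r ≡ s [MOD 8]` gives.
-/

open scoped Classical

/-- The Hilbert symbol of `a, b` in a field `K`: `1` if `a x² + b y² = 1` has a
solution, `-1` otherwise. -/
noncomputable def hilbertSym (K : Type*) [Field K] (a b : K) : ℤ :=
  if ∃ x y : K, a * x ^ 2 + b * y ^ 2 = 1 then 1 else -1

/-- The Hasse–Witt invariant of the diagonal quadratic form `⟨d 0, …, d (n-1)⟩` over a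
field `K` (valued in `{±1} ≅ Br₂`): the product of the Hilbert symbols `(d i, d j)` over
pairs `i < j`. -/
noncomputable def hasseInv (K : Type*) [Field K] {n : ℕ} (d : Fin n → K) : ℤ :=
  ∏ ij ∈ Finset.univ.filter (fun ij : Fin n × Fin n => ij.1 < ij.2),
    hilbertSym K (d ij.1) (d ij.2)

open Finset

theorem Nat.choose_two_add_four_mul_modEq (u q : ℕ) :
    (u + 4 * q).choose 2 ≡ u.choose 2 [MOD 2] := by
  induction q with
  | zero => rfl
  | succ q ih =>
    have step :
        (u + 4 * q + 4).choose 2 = (u + 4 * q).choose 2 + 2 * (2 * (u + 4 * q) + 3) := by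
      simp only [Nat.choose_succ_succ', Nat.choose_zero_right, zero_add, Nat.choose_one_right]
      ring
    rw [mul_add_one, ← add_assoc, step]
    unfold Nat.ModEq at ih ⊢
    omega

theorem Nat.choose_two_modEq_two_of_modEq_four {a b : ℕ} (h : a ≡ b [MOD 4]) :
    a.choose 2 ≡ b.choose 2 [MOD 2] := by
  rw [← Nat.mod_add_div a 4, ← Nat.mod_add_div b 4, (h : a % 4 = b % 4)]
  exact (Nat.choose_two_add_four_mul_modEq _ _).trans (Nat.choose_two_add_four_mul_modEq _ _).symm

theorem Fin.card_filter_le_val (n t : ℕ) : #{i : Fin n | t ≤ (i : ℕ)} = n - t := by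
  simp_rw [← not_lt]
  rw [filter_not, card_sdiff_of_subset (filter_subset _ _), Fin.card_filter_val_lt, card_univ,
    Fintype.card_fin]
  omega

section
variable (K : Type*) [Field K]

theorem hilbertSym_one_left (b : K) : hilbertSym K 1 b = 1 :=
  if_pos ⟨1, 0, by ring⟩

theorem hilbertSym_one_right (a : K) : hilbertSym K a 1 = 1 :=
  if_pos ⟨0, 1, by ring⟩

theorem hilbertSym_sq (a b : K) : hilbertSym K a b ^ 2 = 1 := by
  unfold hilbertSym; split_ifs <;> norm_num

theorem hasseInv_ite_lt (n t : ℕ) (a : K) :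
    hasseInv K (fun i : Fin n => if (i : ℕ) < t then 1 else a)
      = hilbertSym K a a ^ (n - t).choose 2 := by
  have hterm : ∀ i j : Fin n,
      hilbertSym K (if (i : ℕ) < t then 1 else a) (if (j : ℕ) < t then 1 else a)
        = if t ≤ (i : ℕ) ∧ t ≤ (j : ℕ) then hilbertSym K a a else 1 := by
    intro i j
    by_cases hi : (i : ℕ) < t
    · simp [hi, hilbertSym_one_left]
    by_cases hj : (j : ℕ) < t
    · simp [hj, hilbertSym_one_right]
    simp [hi, hj, not_lt.1 hi, not_lt.1 hj]
  set S : Finset (Fin n) := {i | t ≤ (i : ℕ)} with hS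
  have hpairs : (univ.filter (fun ij : Fin n × Fin n => ij.1 < ij.2)).filter
        (fun ij => t ≤ (ij.1 : ℕ) ∧ t ≤ (ij.2 : ℕ))
      = (S ×ˢ S).filter (fun ij => ij.1 < ij.2) := by
    ext; simp only [hS, mem_filter, mem_univ, mem_product, true_and]; tauto
  rw [hasseInv, prod_congr rfl fun ij _ => hterm ij.1 ij.2, prod_ite, prod_const_one, mul_one,
    prod_const, hpairs, card_product_filter_lt, hS, Fin.card_filter_le_val]

end

/-- Let `r ≡ s (mod 8)` and let `q_{r,s}` be the diagonal form over `ℚ_p`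
with `r` entries `1` and `s` entries `-1`. Then for every prime `p` the Hasse–Witt
invariant of `q_{r,s}` over `ℚ_p` equals that of the hyperbolic form of dimension
`r + s` (which diagonalizes as `(r+s)/2` entries `1` and `(r+s)/2` entries `-1`). -/
theorem stmt8 (p : ℕ) [Fact p.Prime] (r s : ℕ) (h : r ≡ s [MOD 8]) :
    hasseInv ℚ_[p] (fun i : Fin (r + s) => if (i : ℕ) < r then (1 : ℚ_[p]) else -1)
      = hasseInv ℚ_[p]
        (fun i : Fin (r + s) => if (i : ℕ) < (r + s) / 2 then (1 : ℚ_[p]) else -1) := by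
  rw [hasseInv_ite_lt, hasseInv_ite_lt]
  refine pow_eq_pow_of_modEq ?_ (hilbertSym_sq _ _ _)
  have h8 : r % 8 = s % 8 := h
  have hr : r + s - r = s := by omega
  have hm : r + s - (r + s) / 2 = (r + s) / 2 := by omega
  rw [hr, hm]
  exact Nat.choose_two_modEq_two_of_modEq_four (by unfold Nat.ModEq; omega)
end

section
/- Let a ≥ 0 be an integer and S_a(X) = X^6 − aX^5 − X^4 + (2a−1)X^3 − X^2 − aX + 1. Then the resultant of S_a and the cyclotomic polynomial Φ₃(X) = X² + X + 1 equals 3(a+1) − 1 up to sign, and in particular Res(S_a, Φ₃) ≡ 2 (mod 3), so it is divisible by some prime p with p ≡ 2 (mod 3). -/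
open Polynomial

noncomputable def sPoly (a : ℤ) : ℤ[X] :=
  X ^ 6 - C a * X ^ 5 - X ^ 4 + C (2 * a - 1) * X ^ 3 - X ^ 2 - C a * X + 1

theorem sPoly_eq_mul_add (a : ℤ) :
    sPoly a = (X ^ 2 + X + 1) *
        (X ^ 4 - C (a + 1) * X ^ 3 + C (a - 1) * X ^ 2 + C (2 * a + 1) * X - C (3 * a + 1)) +
      C (3 * (a + 1) - 1) := by
  simp only [sPoly, C_add, C_sub, C_mul, C_1, C_ofNat]
  ring

theorem aeval_sPoly_of_sq_add_add_one_eq_zero {R : Type*} [CommRing R] (a : ℤ) {ζ : R}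
    (hζ : ζ ^ 2 + ζ + 1 = 0) : aeval ζ (sPoly a) = ((3 * (a + 1) - 1 : ℤ) : R) := by
  rw [sPoly_eq_mul_add, map_add, map_mul, aeval_C]
  simp [hζ]

theorem Nat.exists_prime_mod_three_eq_two_dvd (n : ℕ) (hn : n % 3 = 2) :
    ∃ p, p.Prime ∧ p % 3 = 2 ∧ p ∣ n := by
  induction n using Nat.recOnMul with
  | zero => omega
  | one => omega
  | prime p hp => exact ⟨p, hp, hn, dvd_rfl⟩
  | mul m k ihm ihk =>
    -- residues 0 and 1 are closed under multiplication, so one factor must be `2 mod 3`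
    have : m % 3 = 2 ∨ k % 3 = 2 := by
      rw [Nat.mul_mod] at hn
      have := Nat.mod_lt m three_pos
      have := Nat.mod_lt k three_pos
      interval_cases m % 3 <;> interval_cases k % 3 <;> simp_all
    rcases this with hm | hk
    · obtain ⟨p, hp, hp3, hpm⟩ := ihm hm
      exact ⟨p, hp, hp3, hpm.mul_right k⟩
    · obtain ⟨p, hp, hp3, hpk⟩ := ihk hk
      exact ⟨p, hp, hp3, hpk.mul_left m⟩

/-- For an integer `a ≥ 0` and
`S_a(X) = X⁶ − aX⁵ − X⁴ + (2a−1)X³ − X² − aX + 1`, the resultant of `S_a` with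
`Φ₃(X) = X² + X + 1` equals `3(a+1) − 1` (up to sign): concretely, `S_a(ζ) = 3(a+1) − 1`
for every primitive cube root of unity `ζ`, so the resultant
`N_{ℚ(ζ₃)/ℚ}(S_a(ζ₃))` is built from `3(a+1) − 1`; moreover `3(a+1) − 1 ≡ 2 (mod 3)`,
hence it is divisible by some prime `p ≡ 2 (mod 3)`. -/
theorem stmt16 (a : ℕ) :
    (∀ ζ : ℂ, ζ ^ 2 + ζ + 1 = 0 →
        Polynomial.aeval ζ
          (X ^ 6 - C (a : ℤ) * X ^ 5 - X ^ 4 + C (2 * (a : ℤ) - 1) * X ^ 3 - X ^ 2 -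
            C (a : ℤ) * X + 1 : Polynomial ℤ)
          = ((3 * ((a : ℤ) + 1) - 1 : ℤ) : ℂ)) ∧
    (3 * ((a : ℤ) + 1) - 1) % 3 = 2 ∧
    ∃ p : ℕ, p.Prime ∧ p % 3 = 2 ∧ (p : ℤ) ∣ (3 * ((a : ℤ) + 1) - 1) := by
  refine ⟨fun ζ hζ => aeval_sPoly_of_sq_add_add_one_eq_zero a hζ, by omega, ?_⟩
  obtain ⟨p, hp, hp3, hpd⟩ := Nat.exists_prime_mod_three_eq_two_dvd (3 * a + 2) (by omega)
  refine ⟨p, hp, hp3, ?_⟩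
  have hcast : 3 * ((a : ℤ) + 1) - 1 = ((3 * a + 2 : ℕ) : ℤ) := by push_cast; ring
  rw [hcast]
  exact Int.natCast_dvd_natCast.mpr hpd
end
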